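/- arXiv:2006.15978 — 3 statements merged into one kernel-verified Lean document; each statement's English description precedes it below -/
import Mathlib

section
/- Let G be a finite p-group and F a field of characteristic p. Up to isomorphism, there is a unique cyclic F G-module of dimension |G| - 1 over F; it is isomorphic to F G / (N), where N = Σ_{g∈G} g is the norm element, and it fits into a short exact sequence 0 → F → F G → M → 0 where F → F G sends 1 to N. -/
/-- The norm element `N = ∑_{g ∈ G} g` of the group algebra. -/
noncomputable def normElem (F : Type) (G : Type) [Field F] [Group G] [Fintype G] :
    MonoidAlgebra F G :=
  ∑ g : G, MonoidAlgebra.of F G g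

/-!
Every `g ∈ G` fixes `N`, so `x N = ε(x) N` and the left ideal `(N)` is the line `F N`; hence
`F G/(N)` is cyclic of dimension `|G| - 1`. Conversely, a cyclic module `M` of dimension `|G| - 1`
is `F G/K` for a left ideal `K` that is a line. `G` acts on that line through a character, whose
values are `p`-power roots of unity and therefore equal to `1` in characteristic `p`; so `K`
consists of `G`-invariant elements, which are the multiples of `N`, and `K = (N)`.
-/

open MonoidAlgebra Module

theorem eq_one_of_pow_prime_pow_eq_one {R : Type*} [CommRing R] [IsReduced R] (p : ℕ)
    [ExpChar R p] {c : R} {n : ℕ} (h : c ^ p ^ n = 1) : c = 1 :=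
  iterateFrobenius_inj R p n (by simpa [iterateFrobenius_def] using h)

theorem Module.End.HasEigenvector.apply_eq_self_of_pow_prime_pow_eq_one {K V : Type*}
    [Field K] (p : ℕ) [ExpChar K p] [AddCommGroup V] [Module K V] {f : End K V} {n : ℕ}
    (hf : f ^ p ^ n = 1) {c : K} {v : V} (hv : f.HasEigenvector c v) : f v = v := by
  have hc : c ^ p ^ n • v = (1 : K) • v := by
    rw [← hv.pow_apply, hf, End.one_apply, one_smul]
  rw [hv.apply_eq_smul, eq_one_of_pow_prime_pow_eq_one p (smul_left_injective K hv.2 hc),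
    one_smul]

theorem Submodule.span_mkQ_one_eq_top {R : Type*} [Ring R] (K : Submodule R R) :
    span R {K.mkQ 1} = ⊤ :=
  eq_top_iff.2 fun x _ => by
    obtain ⟨y, rfl⟩ := K.mkQ_surjective x
    exact mem_span_singleton.2 ⟨y, by rw [← map_smul, smul_eq_mul, mul_one]⟩

section NormElem

variable {F G : Type} [Field F] [Group G] [Fintype G]

omit [Group G] in
theorem finrank_monoidAlgebra : finrank F (MonoidAlgebra F G) = Fintype.card G :=
  (coeffLinearEquiv F).finrank_eq.trans (finrank_finsupp_self F)

theorem normElem_coeff (h : G) : (normElem F G).coeff h = 1 := by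
  classical
  simp [normElem, coeff_sum, Finsupp.finsetSum_apply, of_apply, coeff_single,
    Finsupp.single_apply]

theorem normElem_ne_zero : normElem F G ≠ 0 := fun h => by
  simpa [h] using normElem_coeff (F := F) (1 : G)

theorem of_mul_normElem (g : G) : of F G g * normElem F G = normElem F G := by
  rw [normElem, Finset.mul_sum]
  exact Fintype.sum_equiv (Equiv.mulLeft g) _ _ fun h => (map_mul (of F G) g h).symm

theorem mul_normElem_mem_span (x : MonoidAlgebra F G) :
    x * normElem F G ∈ Submodule.span F {normElem F G} := by
  induction x using MonoidAlgebra.induction with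
  | zero => simp
  | single_add g c x _ _ ih =>
    rw [add_mul, ← smul_of, smul_mul_assoc, of_mul_normElem]
    exact add_mem (Submodule.smul_mem _ _ (Submodule.mem_span_singleton_self _)) ih

theorem restrictScalars_span_normElem :
    (Submodule.span (MonoidAlgebra F G) {normElem F G}).restrictScalars F
      = Submodule.span F {normElem F G} := by
  refine le_antisymm (fun y hy => ?_) (Submodule.span_le_restrictScalars F _ _)
  obtain ⟨x, rfl⟩ := Submodule.mem_span_singleton.mp hy
  exact mul_normElem_mem_span x

theorem eq_coeff_one_smul_normElem {v : MonoidAlgebra F G} (hv : ∀ g : G, of F G g * v = v) :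
    v = v.coeff 1 • normElem F G := by
  refine coeff_injective (Finsupp.ext fun h => ?_)
  have := congrArg (fun x => x.coeff h) (hv h)
  simp only [of_apply, coeff_single_mul_apply, one_mul, inv_mul_cancel] at this
  rw [coeff_smul, Finsupp.smul_apply, normElem_coeff, smul_eq_mul, mul_one, this]

theorem smul_normElem_injective : Function.Injective (fun c : F => c • normElem F G) :=
  smul_left_injective F normElem_ne_zero

theorem finrank_quotient_span_normElem :
    finrank F (MonoidAlgebra F G ⧸ Submodule.span (MonoidAlgebra F G) {normElem F G})
      = Fintype.card G - 1 := by
  let K := Submodule.span (MonoidAlgebra F G) {normElem F G}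
  have hK : finrank F (K.restrictScalars F) = 1 := by
    rw [restrictScalars_span_normElem, finrank_span_singleton normElem_ne_zero]
  have := Submodule.finrank_quotient_add_finrank (K.restrictScalars F)
  rw [hK, finrank_monoidAlgebra] at this
  rw [← (Submodule.Quotient.restrictScalarsEquiv F K).finrank_eq]
  omega

theorem eq_span_normElem_of_finrank_eq_one {p : ℕ} [Fact p.Prime] [CharP F p]
    (hG : IsPGroup p G) {K : Submodule (MonoidAlgebra F G) (MonoidAlgebra F G)}
    (hK : finrank F (K.restrictScalars F) = 1) :
    K = Submodule.span (MonoidAlgebra F G) {normElem F G} := by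
  obtain ⟨v, hvK, hv0⟩ := Submodule.exists_mem_ne_zero_of_ne_bot
    (Submodule.one_le_finrank_iff.mp hK.ge)
  have hKv : K.restrictScalars F = Submodule.span F {v} :=
    eq_span_singleton_of_mem_of_finrank_eq_one hK hvK hv0
  have hinv (g : G) : of F G g * v = v := by
    obtain ⟨k, hk⟩ := hG g
    obtain ⟨c, hc⟩ : ∃ c : F, c • v = of F G g * v :=
      Submodule.mem_span_singleton.mp (hKv ▸ K.smul_mem (of F G g) hvK)
    have hpow : LinearMap.mulLeft F (of F G g) ^ p ^ k = 1 := by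
      rw [LinearMap.pow_mulLeft, ← map_pow, hk, map_one, LinearMap.mulLeft_one, End.one_eq_id]
    exact End.HasEigenvector.apply_eq_self_of_pow_prime_pow_eq_one p hpow
      ⟨End.mem_eigenspace_iff.mpr hc.symm, hv0⟩
  have hv1 : IsUnit (v.coeff 1) :=
    IsUnit.mk0 _ fun h => hv0 (by rw [eq_coeff_one_smul_normElem hinv, h, zero_smul])
  apply Submodule.restrictScalars_injective F
  rw [hKv, restrictScalars_span_normElem, eq_coeff_one_smul_normElem hinv,
    Submodule.span_singleton_smul_eq hv1]

theorem nonempty_linearEquiv_quotient_span_normElem {p : ℕ} [Fact p.Prime] [CharP F p]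
    (hG : IsPGroup p G) (M : Type) [AddCommGroup M] [Module F M] [Module (MonoidAlgebra F G) M]
    [IsScalarTower F (MonoidAlgebra F G) M] {m : M}
    (hm : Submodule.span (MonoidAlgebra F G) {m} = ⊤) (hM : finrank F M = Fintype.card G - 1) :
    Nonempty (M ≃ₗ[MonoidAlgebra F G]
      (MonoidAlgebra F G ⧸ Submodule.span (MonoidAlgebra F G) {normElem F G})) := by
  let φ := LinearMap.toSpanSingleton (MonoidAlgebra F G) M m
  have hφ : Function.Surjective φ := by
    rw [← LinearMap.range_eq_top, LinearMap.range_toSpanSingleton, hm]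
  have hker : finrank F ((LinearMap.ker φ).restrictScalars F) = 1 := by
    have := LinearMap.finrank_range_add_finrank_ker (φ.restrictScalars F)
    rw [(LinearMap.range_eq_top (f := φ.restrictScalars F)).mpr hφ, finrank_top, hM,
      finrank_monoidAlgebra, LinearMap.ker_restrictScalars] at this
    have := Fintype.card_pos (α := G)
    omega
  exact ⟨(φ.quotKerEquivOfSurjective hφ).symm.trans
    (Submodule.quotEquivOfEq _ _ (eq_span_normElem_of_finrank_eq_one hG hker))⟩

end NormElem

/-- Over a field `F` of characteristic `p` and a finite `p`-group `G`, there is a unique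
cyclic `F G`-module of dimension `|G| - 1`: any such module is isomorphic to `F G/(N)`,
which is itself cyclic of dimension `|G| - 1`, and it fits into the short exact sequence
`0 → F → F G → F G/(N) → 0` where `F → F G` sends `1` to the norm `N`. -/
theorem stmt4 (p : ℕ) [Fact p.Prime] (F : Type) [Field F] [CharP F p]
    (G : Type) [Group G] [Fintype G] (hG : IsPGroup p G) :
    (∀ (M : Type) [AddCommGroup M] [Module F M] [Module (MonoidAlgebra F G) M]
        [IsScalarTower F (MonoidAlgebra F G) M],
      (∃ m : M, Submodule.span (MonoidAlgebra F G) {m} = ⊤) →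
      Module.finrank F M = Fintype.card G - 1 →
      Nonempty (M ≃ₗ[MonoidAlgebra F G]
        (MonoidAlgebra F G ⧸ Submodule.span (MonoidAlgebra F G) {normElem F G}))) ∧
    (∃ m : (MonoidAlgebra F G ⧸ Submodule.span (MonoidAlgebra F G) {normElem F G}),
      Submodule.span (MonoidAlgebra F G) {m} = ⊤) ∧
    Module.finrank F (MonoidAlgebra F G ⧸ Submodule.span (MonoidAlgebra F G) {normElem F G})
      = Fintype.card G - 1 ∧
    Function.Injective (fun c : F => c • normElem F G) ∧
    (Submodule.span (MonoidAlgebra F G) {normElem F G}).restrictScalars F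
      = Submodule.span F {normElem F G} :=
  ⟨fun M _ _ _ _ ⟨_, hm⟩ hM => nonempty_linearEquiv_quotient_span_normElem hG M hm hM,
    ⟨_, Submodule.span_mkQ_one_eq_top _⟩, finrank_quotient_span_normElem,
    smul_normElem_injective, restrictScalars_span_normElem⟩
end

section
/- Let G be a finite p-group and F a field of characteristic p. If a finite-dimensional F G-module M₁ contains an element m with N·m ≠ 0 (where N is the norm element), then M₁ has a direct summand isomorphic to F G. -/
theorem IsPGroup.exists_fixed_ne_zero_mem_closure {p : ℕ} [Fact p.Prime] {G V : Type*}
    [Group G] [Finite G] (hG : IsPGroup p G) [AddCommGroup V] [DistribMulAction G V]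
    (hV : ∀ v : V, p • v = 0) {x : V} (hx : x ≠ 0) :
    ∃ y ∈ AddSubgroup.closure (Set.range fun g : G => g • x), y ≠ 0 ∧ ∀ g : G, g • y = y := by
  set W := AddSubgroup.closure (Set.range fun g : G => g • x)
  have hW (g : G) {w : V} (hw : w ∈ W) : g • w ∈ W := by
    have : W.map (DistribSMul.toAddMonoidHom V g) ≤ W := by
      rw [AddMonoidHom.map_closure, AddSubgroup.closure_le, ← Set.range_comp]
      rintro _ ⟨h, rfl⟩
      exact AddSubgroup.subset_closure ⟨g * h, mul_smul g h x⟩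
    exact this ⟨w, hw, rfl⟩
  have : AddGroup.FG W := (AddGroup.fg_iff_addSubgroup_fg W).mpr
    ⟨(Set.finite_range _).toFinset, by rw [Set.Finite.coe_toFinset]⟩
  have : Finite W := AddCommGroup.finite_of_fg_isAddTorsion _ fun w =>
    isOfFinAddOrder_iff_nsmul_eq_zero.mpr ⟨p, (Fact.out : p.Prime).pos, Subtype.ext (hV w.1)⟩
  let S : SubMulAction G V := ⟨W, fun g _ hw => hW g hw⟩
  have hpS : p ∣ Nat.card S := addOrderOf_eq_prime (hV x) hx ▸
    AddSubgroup.addOrderOf_dvd_natCard W (AddSubgroup.subset_closure ⟨1, one_smul G x⟩)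
  obtain ⟨y, hy_fixed, hy_ne⟩ :=
    hG.exists_fixed_point_of_prime_dvd_card_of_fixed_point S hpS (a := ⟨0, W.zero_mem⟩)
      fun g => Subtype.ext (smul_zero g)
  exact ⟨y, y.2, fun h => hy_ne (Subtype.ext h.symm), fun g => congrArg Subtype.val (hy_fixed g)⟩

theorem LinearMap.isCompl_range_ker_of_leftInverse {R M N : Type*} [Ring R] [AddCommGroup M]
    [Module R M] [AddCommGroup N] [Module R N] {φ : N →ₗ[R] M} {ρ : M →ₗ[R] N}
    (h : Function.LeftInverse ρ φ) : IsCompl (range φ) (ker ρ) := by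
  have := LinearMap.isCompl_of_proj (f := (LinearEquiv.ofLeftInverse h).toLinearMap ∘ₗ ρ) ?_
  · rwa [LinearEquiv.ker_comp] at this
  · rintro ⟨_, n, rfl⟩
    ext
    simp [h n]

theorem Module.exists_isCompl_linearEquiv_self_of_isUnit {R M : Type*} [Ring R] [AddCommGroup M]
    [Module R M] {θ : M →ₗ[R] R} {m : M} (hθm : IsUnit (θ m)) :
    ∃ A B : Submodule R M, IsCompl A B ∧ Nonempty (A ≃ₗ[R] R) := by
  let φ := LinearMap.toSpanSingleton R M m
  let ρ := LinearMap.toSpanSingleton R R ↑hθm.unit⁻¹ ∘ₗ θ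
  have hρφ : Function.LeftInverse ρ φ := fun r => by simp [φ, ρ]
  exact ⟨_, _, LinearMap.isCompl_range_ker_of_leftInverse hρφ,
    ⟨(LinearEquiv.ofLeftInverse hρφ).symm⟩⟩

namespace MonoidAlgebra

theorem charP_nsmul_eq_zero {F G M : Type*} [CommSemiring F] [Monoid G] (p : ℕ) [CharP F p]
    [AddCommMonoid M] [Module (MonoidAlgebra F G) M] (v : M) : p • v = 0 := by
  rw [← Nat.cast_smul_eq_nsmul (MonoidAlgebra F G), ← map_natCast (algebraMap F _),
    CharP.cast_eq_zero, map_zero, zero_smul]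

theorem exists_fixed_ne_zero_mem_span {p : ℕ} [Fact p.Prime] {F G M : Type*} [CommRing F]
    [CharP F p] [Group G] [Finite G] (hG : IsPGroup p G) [AddCommGroup M]
    [Module (MonoidAlgebra F G) M] {x : M} (hx : x ≠ 0) :
    ∃ y ∈ Submodule.span (MonoidAlgebra F G) {x}, y ≠ 0 ∧ ∀ g : G, of F G g • y = y := by
  let := DistribMulAction.compHom M (of F G)
  obtain ⟨y, hy_mem, hy_ne, hy_fixed⟩ :=
    hG.exists_fixed_ne_zero_mem_closure (charP_nsmul_eq_zero (F := F) (G := G) p) hx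
  refine ⟨y, ?_, hy_ne, hy_fixed⟩
  refine (AddSubgroup.closure_le (Submodule.span _ {x}).toAddSubgroup).mpr ?_ hy_mem
  rintro _ ⟨g, rfl⟩
  exact Submodule.smul_mem _ _ (Submodule.mem_span_singleton_self x)

variable (F : Type) [Field F] (G : Type) [Group G] [Fintype G]

noncomputable abbrev augmentation : MonoidAlgebra F G →ₐ[F] F := lift F F G 1

variable {G}

theorem coeff_normElem (g : G) : (normElem F G).coeff g = 1 := by
  classical
  simp [normElem, coeff_sum, of_apply, Finsupp.single_apply]

variable (G) in
theorem normElem_ne_zero : normElem F G ≠ 0 := fun h => by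
  simpa [h] using coeff_normElem F (1 : G)

theorem normElem_mul_of (g : G) : normElem F G * of F G g = normElem F G := by
  simp only [normElem, Finset.sum_mul, ← map_mul]
  exact Fintype.sum_equiv (Equiv.mulRight g) _ _ fun _ => rfl

theorem normElem_mul (c : MonoidAlgebra F G) :
    normElem F G * c = augmentation F G c • normElem F G := by
  induction c using induction_linear with
  | zero => simp
  | add a b ha hb => rw [mul_add, ha, hb, map_add, add_smul]
  | single g a =>
    rw [← smul_of, mul_smul_comm, normElem_mul_of, map_smul]
    simp

theorem eq_coeff_one_smul_normElem {y : MonoidAlgebra F G} (hy : ∀ g : G, of F G g * y = y) :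
    y = y.coeff 1 • normElem F G := by
  ext g
  have := congrArg (fun z : MonoidAlgebra F G => z.coeff 1) (hy g⁻¹)
  rw [of_apply, coeff_single_mul_apply, inv_inv, mul_one, one_mul] at this
  simp [coeff_normElem, this]

theorem normElem_mem_span_singleton {p : ℕ} [Fact p.Prime] [CharP F p] (hG : IsPGroup p G)
    {r : MonoidAlgebra F G} (hr : r ≠ 0) :
    normElem F G ∈ Submodule.span (MonoidAlgebra F G) {r} := by
  obtain ⟨y, hy_mem, hy_ne, hy_fixed⟩ := exists_fixed_ne_zero_mem_span (F := F) hG hr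
  rw [eq_coeff_one_smul_normElem F hy_fixed] at hy_mem hy_ne
  have ha : y.coeff 1 ≠ 0 := fun h => hy_ne (by rw [h, zero_smul])
  simpa [ha] using Submodule.smul_of_tower_mem (Submodule.span _ {r}) (y.coeff 1)⁻¹ hy_mem

theorem isUnit_of_augmentation_ne_zero {p : ℕ} [Fact p.Prime] [CharP F p] (hG : IsPGroup p G)
    {c : MonoidAlgebra F G} (hc : augmentation F G c ≠ 0) : IsUnit c := by
  have : IsArtinianRing (MonoidAlgebra F G) := .of_finite F _
  refine IsArtinianRing.isUnit_iff_isRightRegular.mpr <|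
    isRightRegular_iff_left_eq_zero_of_mul.mpr fun r hrc => ?_
  by_contra hr
  obtain ⟨s, hs⟩ := Submodule.mem_span_singleton.mp (normElem_mem_span_singleton F hG hr)
  have : augmentation F G c • normElem F G = 0 := by
    rw [← normElem_mul, ← hs, smul_eq_mul, mul_assoc, hrc, mul_zero]
  exact normElem_ne_zero F G ((smul_eq_zero.mp this).resolve_left hc)

variable {M : Type*} [AddCommGroup M] [Module F M] [Module (MonoidAlgebra F G) M]
  [IsScalarTower F (MonoidAlgebra F G) M]

variable {F} (G) in
/-- The image of `f` under `Hom_F(M, F) ≃ Hom_{F G}(M, F G)`: `v ↦ ∑ g, f (g • v) • g⁻¹`. -/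
noncomputable def dualLift (f : Module.Dual F M) : M →ₗ[MonoidAlgebra F G] MonoidAlgebra F G :=
  equivariantOfLinearOfComm (∑ g : G, (f ∘ₗ GroupSMul.linearMap F M g).smulRight (of F G g⁻¹))
    fun h v => by
      simp only [LinearMap.coe_sum, Finset.sum_apply, LinearMap.smulRight_apply,
        LinearMap.comp_apply, GroupSMul.linearMap_apply, Finset.smul_sum]
      refine Fintype.sum_equiv (Equiv.mulRight h) _ _ fun g => ?_
      simp [smul_smul, single_mul_single, of_apply]

theorem augmentation_dualLift (f : Module.Dual F M) (v : M) :
    augmentation F G (dualLift G f v) = f (normElem F G • v) := by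
  simp [dualLift, normElem, Finset.sum_smul]

end MonoidAlgebra

theorem stmt6_general (p : ℕ) [Fact p.Prime] (F : Type) [Field F] [CharP F p]
    (G : Type) [Group G] [Fintype G] (hG : IsPGroup p G)
    (M₁ : Type) [AddCommGroup M₁] [Module F M₁] [Module (MonoidAlgebra F G) M₁]
    [IsScalarTower F (MonoidAlgebra F G) M₁]
    (h : ∃ m : M₁, normElem F G • m ≠ 0) :
    ∃ (A B : Submodule (MonoidAlgebra F G) M₁), IsCompl A B ∧
      Nonempty (A ≃ₗ[MonoidAlgebra F G] MonoidAlgebra F G) := by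
  obtain ⟨m, hm⟩ := h
  obtain ⟨f, hf⟩ := Module.Projective.exists_dual_ne_zero F hm
  have hc : IsUnit (MonoidAlgebra.dualLift G f m) := by
    apply MonoidAlgebra.isUnit_of_augmentation_ne_zero F hG
    rwa [MonoidAlgebra.augmentation_dualLift]
  exact Module.exists_isCompl_linearEquiv_self_of_isUnit hc

/-- If a finite-dimensional `F G`-module `M₁` (with `G` a finite `p`-group, `char F = p`)
contains an element `m` with `N • m ≠ 0`, then `M₁` has a direct summand isomorphic to
`F G`. -/
theorem stmt6 (p : ℕ) [Fact p.Prime] (F : Type) [Field F] [CharP F p]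
    (G : Type) [Group G] [Fintype G] (hG : IsPGroup p G)
    (M₁ : Type) [AddCommGroup M₁] [Module F M₁] [Module (MonoidAlgebra F G) M₁]
    [IsScalarTower F (MonoidAlgebra F G) M₁] [FiniteDimensional F M₁]
    (h : ∃ m : M₁, normElem F G • m ≠ 0) :
    ∃ (A B : Submodule (MonoidAlgebra F G) M₁), IsCompl A B ∧
      Nonempty (A ≃ₗ[MonoidAlgebra F G] MonoidAlgebra F G) :=
  stmt6_general p F G hG M₁ h
end

section
/- Let G be a group, let Φ²(G) denote the subgroup generated by p-th powers and commutators of elements of the commutator subgroup mixed with G so that Φ(G)/Φ²(G) is an abelian group of exponent p on which G acts by conjugation through G/Φ(G). Then for x, y, z ∈ G, in the F_p[G/Φ(G)]-module Φ(G)/Φ²(G) (written additively) the Jacobi-type relation holds: (y,x)·Z + (x,z)·Y + (z,y)·X = 0, where X = x - 1, Y = y - 1, Z = z - 1 act via the group algebra. -/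
/-- The commutator `(a,b) = a⁻¹b⁻¹ab`. -/
def cmt {G : Type*} [Group G] (a b : G) : G := a⁻¹ * b⁻¹ * a * b

/-- Conjugation `a^b = b⁻¹ab`. -/
def cnj {G : Type*} [Group G] (a b : G) : G := b⁻¹ * a * b

/-- The Frattini-type subgroup `Φ(G) = G^p (G,G)`: the subgroup generated by `p`-th powers
and commutators. -/
def phiSub (p : ℕ) (G : Type*) [Group G] : Subgroup G :=
  Subgroup.closure ({x | ∃ g : G, x = g ^ p} ∪ {x | ∃ a b : G, x = cmt a b})

/-- `Φ²(G) = Φ(Φ(G))`, viewed as a subgroup of `G`. -/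
def phi2Sub (p : ℕ) (G : Type*) [Group G] : Subgroup G :=
  (phiSub p ↥(phiSub p G)).map (phiSub p G).subtype

/-!
Modulo `[G', G']` all commutators commute, and there `(a,b)^c (a,b)⁻¹` equals the Hall–Witt
factor `((b,a⁻¹),c)^a`; the three terms of the relation thus multiply to `1` by the Hall–Witt
identity. Hence the product lies in `[G', G'] ≤ [Φ(G), Φ(G)] ≤ Φ(Φ(G))`.
-/

open scoped commutatorElement

section Commutators

variable {G H : Type*} [Group G] [Group H]

theorem cmt_eq_commutatorElement (a b : G) : cmt a b = ⁅a⁻¹, b⁻¹⁆ := by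
  simp [cmt, commutatorElement_def]

theorem cnj_cmt (a b c : G) : cnj (cmt a b) c = cmt (cnj a c) (cnj b c) := by
  simp only [cmt, cnj]; group

theorem cnj_eq_self_of_commute {a c : G} (h : Commute a c) : cnj a c = a := by
  rw [cnj, mul_assoc, h.eq, inv_mul_cancel_left]

theorem map_cmt (f : G →* H) (a b : G) : f (cmt a b) = cmt (f a) (f b) := by
  simp [cmt]

theorem map_cnj (f : G →* H) (a c : G) : f (cnj a c) = cnj (f a) (f c) := by
  simp [cnj]

theorem cmt_mem_commutator (a b : G) : cmt a b ∈ commutator G := by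
  rw [cmt_eq_commutatorElement, commutator_def]
  exact Subgroup.commutator_mem_commutator (Subgroup.mem_top _) (Subgroup.mem_top _)

end Commutators

section CommutingCommutators

variable {Q : Type*} [Group Q]

theorem cnj_cmt_mul_inv_eq_cnj_cmt_cmt (h : ∀ a b c d : Q, Commute (cmt a b) (cmt c d))
    (a b c : Q) : cnj (cmt a b) c * (cmt a b)⁻¹ = cnj (cmt (cmt b a⁻¹) c) a := by
  have hu : Commute (cmt b a) (cnj (cmt b a) c) := by rw [cnj_cmt]; exact h _ _ _ _
  have hv : Commute (cnj (cmt b a) c) (cmt c a) := by rw [cnj_cmt]; exact h _ _ _ _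
  calc cnj (cmt a b) c * (cmt a b)⁻¹ = (cnj (cmt b a) c)⁻¹ * cmt b a := by
        simp only [cmt, cnj]; group
    _ = cmt b a * (cnj (cmt b a) c)⁻¹ := hu.inv_right.eq.symm
    _ = cmt b a * (cnj (cnj (cmt b a) c) (cmt c a))⁻¹ := by rw [cnj_eq_self_of_commute hv]
    _ = cnj (cmt (cmt b a⁻¹) c) a := by simp only [cmt, cnj]; group

theorem jacobi_eq_one_of_commute_cmt (h : ∀ a b c d : Q, Commute (cmt a b) (cmt c d))
    (x y z : Q) :
    (cnj (cmt y x) z * (cmt y x)⁻¹) * (cnj (cmt x z) y * (cmt x z)⁻¹) *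
      (cnj (cmt z y) x * (cmt z y)⁻¹) = 1 := by
  rw [cnj_cmt_mul_inv_eq_cnj_cmt_cmt h y x z, cnj_cmt_mul_inv_eq_cnj_cmt_cmt h x z y,
    cnj_cmt_mul_inv_eq_cnj_cmt_cmt h z y x]
  have hswap : Commute (cnj (cmt (cmt z x⁻¹) y) x) (cnj (cmt (cmt y z⁻¹) x) z) := by
    rw [cnj_cmt (cmt z x⁻¹) y x, cnj_cmt (cmt y z⁻¹) x z]; exact h _ _ _ _
  rw [mul_assoc, hswap.eq, ← mul_assoc]
  -- the Hall–Witt identity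
  simp only [cmt, cnj]; group

end CommutingCommutators

section Frattini

variable {G : Type*} [Group G]

theorem commute_cmt_quotient_commutator_commutator
    (a b c d : G ⧸ ⁅commutator G, commutator G⁆) : Commute (cmt a b) (cmt c d) := by
  induction a using QuotientGroup.induction_on
  induction b using QuotientGroup.induction_on
  induction c using QuotientGroup.induction_on
  induction d using QuotientGroup.induction_on
  rw [← commutatorElement_eq_one_iff_commute]
  simp only [← QuotientGroup.mk'_apply, ← map_cmt, ← map_commutatorElement]
  rw [← MonoidHom.mem_ker, QuotientGroup.ker_mk']
  exact Subgroup.commutator_mem_commutator (cmt_mem_commutator _ _) (cmt_mem_commutator _ _)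

theorem jacobi_mem_commutator_commutator (x y z : G) :
    (cnj (cmt y x) z * (cmt y x)⁻¹) * (cnj (cmt x z) y * (cmt x z)⁻¹) *
      (cnj (cmt z y) x * (cmt z y)⁻¹) ∈ ⁅commutator G, commutator G⁆ := by
  rw [← QuotientGroup.ker_mk' ⁅commutator G, commutator G⁆, MonoidHom.mem_ker]
  simp only [map_mul, map_inv, map_cnj, map_cmt]
  exact jacobi_eq_one_of_commute_cmt commute_cmt_quotient_commutator_commutator _ _ _

theorem commutator_le_phiSub (p : ℕ) : commutator G ≤ phiSub p G := by
  rw [commutator_eq_closure, phiSub]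
  refine Subgroup.closure_mono fun g ⟨a, b, hab⟩ => Or.inr ⟨a⁻¹, b⁻¹, ?_⟩
  rw [← hab, cmt_eq_commutatorElement, inv_inv, inv_inv]

theorem commutator_le_map_subtype_phiSub (p : ℕ) (K : Subgroup G) :
    ⁅K, K⁆ ≤ (phiSub p K).map K.subtype := by
  rw [← K.map_subtype_commutator]
  exact Subgroup.map_mono (commutator_le_phiSub p)

end Frattini

theorem stmt10_general (p : ℕ) {G : Type*} [Group G] (x y z : G) :
    (cnj (cmt y x) z * (cmt y x)⁻¹) * (cnj (cmt x z) y * (cmt x z)⁻¹) *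
      (cnj (cmt z y) x * (cmt z y)⁻¹) ∈ phi2Sub p G :=
  commutator_le_map_subtype_phiSub p (phiSub p G) <|
    Subgroup.commutator_mono (commutator_le_phiSub p) (commutator_le_phiSub p)
      (jacobi_mem_commutator_commutator x y z)

/-- The Jacobi-type relation `(y,x)·Z + (x,z)·Y + (z,y)·X = 0` in the
`𝔽_p[G/Φ(G)]`-module `Φ(G)/Φ²(G)`, written multiplicatively: the class of
`(y,x)^z (y,x)⁻¹ · (x,z)^y (x,z)⁻¹ · (z,y)^x (z,y)⁻¹` modulo `Φ²(G)` is trivial. -/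
theorem stmt10 (p : ℕ) [Fact p.Prime] {G : Type*} [Group G] (x y z : G) :
    (cnj (cmt y x) z * (cmt y x)⁻¹) * (cnj (cmt x z) y * (cmt x z)⁻¹) *
      (cnj (cmt z y) x * (cmt z y)⁻¹) ∈ phi2Sub p G :=
  stmt10_general p x y z
end
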